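/- Let I = (𝒳 = {x₁,…,x_n}, 𝒞 = {c₁,…,c_m}) be a SAT instance and let G_I be the graph with vertex set {v} ∪ {w_j : 1 ≤ j ≤ m} ∪ {u_i, u_i' : 1 ≤ i ≤ n} and edges {v w_j : 1 ≤ j ≤ m} ∪ {w_j u_i : x_i ∈ c_j} ∪ {w_j u_i' : ¬x_i ∈ c_j} ∪ {u_i u_i' : 1 ≤ i ≤ n}. Then I is satisfiable if and only if there exists an independent set S ⊆ N₂(v) of G_I that dominates N(v). -/

import Mathlib

variable {V : Type*}

/-- `S` is an independent set of `G`. -/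
def IndepSet (G : SimpleGraph V) (S : Set V) : Prop :=
  ∀ ⦃a⦄, a ∈ S → ∀ ⦃b⦄, b ∈ S → ¬ G.Adj a b

/-- The closed neighborhood `N[S]` of a set of vertices. -/
def ClosedNbhd (G : SimpleGraph V) (S : Set V) : Set V :=
  S ∪ {u | ∃ s ∈ S, G.Adj s u}

/-- `N₂(v)`: vertices at distance exactly 2 from `v`. -/
def N2 (G : SimpleGraph V) (v : V) : Set V := {u | G.dist v u = 2}

/-- `G` contains a cycle of length `k` as a (not necessarily induced) subgraph. -/
def CycleLen (G : SimpleGraph V) (k : ℕ) : Prop :=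
  ∃ f : ZMod k → V, Function.Injective f ∧ ∀ i : ZMod k, G.Adj (f i) (f (i + 1))

/-- A literal: a variable together with a polarity. -/
structure Lit (α : Type*) where
  var : α
  pos : Bool
deriving DecidableEq

/-- The negation of a literal. -/
def Lit.neg {α : Type*} (l : Lit α) : Lit α := ⟨l.var, !l.pos⟩

/-- Evaluation of a literal under a truth assignment. -/
def Lit.eval {α : Type*} (t : α → Bool) (l : Lit α) : Bool :=
  if l.pos then t l.var else !(t l.var)

/-- Vertices of the graph `G_I`: the center `v`, clause vertices `w_j`,
and literal vertices `u_i` (`(i, true)`) and `u_i'` (`(i, false)`). -/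
abbrev GIVert (n m : ℕ) := Unit ⊕ Fin m ⊕ (Fin n × Bool)

/-- The graph `G_I` associated with a SAT instance with `n` variables and `m` clauses. -/
def GI {n m : ℕ} (C : Fin m → Finset (Lit (Fin n))) : SimpleGraph (GIVert n m) :=
  SimpleGraph.fromRel (fun a b =>
    match a, b with
    | Sum.inl _, Sum.inr (Sum.inl _) => True
    | Sum.inr (Sum.inl j), Sum.inr (Sum.inr (i, p)) => (⟨i, p⟩ : Lit (Fin n)) ∈ C j
    | Sum.inr (Sum.inr (i, p)), Sum.inr (Sum.inr (i', p')) => i = i' ∧ p ≠ p'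
    | _, _ => False)

/-- The center vertex `v` of `G_I`. -/
def centerV {n m : ℕ} : GIVert n m := Sum.inl ()

/-- The literal vertex `u_i` (for `b = true`) or `u_i'` (for `b = false`). -/
def litV {n m : ℕ} (i : Fin n) (b : Bool) : GIVert n m := Sum.inr (Sum.inr (i, b))

section Helpers

variable {n m : ℕ} (C : Fin m → Finset (Lit (Fin n)))

lemma adj_center_w (j : Fin m) : (GI C).Adj centerV (Sum.inr (Sum.inl j)) := by
  simp [GI, centerV, SimpleGraph.fromRel_adj]

lemma not_adj_center_lit (i : Fin n) (p : Bool) : ¬ (GI C).Adj centerV (litV i p) := by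
  simp [GI, centerV, litV, SimpleGraph.fromRel_adj]

lemma adj_w_lit (j : Fin m) (i : Fin n) (p : Bool) :
    (GI C).Adj (Sum.inr (Sum.inl j)) (litV i p) ↔ (⟨i, p⟩ : Lit (Fin n)) ∈ C j := by
  simp [GI, litV, SimpleGraph.fromRel_adj]

lemma adj_lit_lit (i i' : Fin n) (p p' : Bool) :
    (GI C).Adj (litV i p) (litV i' p') ↔ i = i' ∧ p ≠ p' := by
  constructor
  · rintro h
    rw [GI, SimpleGraph.fromRel_adj] at h
    obtain ⟨-, h | h⟩ := h
    · exact h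
    · exact ⟨h.1.symm, h.2.symm⟩
  · rintro ⟨rfl, hp⟩
    rw [GI, SimpleGraph.fromRel_adj]
    refine ⟨by simp [litV, hp], Or.inl ⟨rfl, hp⟩⟩

lemma not_adj_w_w (j j' : Fin m) :
    ¬ (GI C).Adj (Sum.inr (Sum.inl j)) (Sum.inr (Sum.inl j')) := by
  simp [GI, SimpleGraph.fromRel_adj]

lemma dist_center_lit {i : Fin n} {p : Bool} {j : Fin m}
    (h : (⟨i, p⟩ : Lit (Fin n)) ∈ C j) : (GI C).dist centerV (litV i p) = 2 := by
  have hwalk : (GI C).Walk centerV (litV i p) :=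
    SimpleGraph.Walk.cons (adj_center_w C j)
      (SimpleGraph.Walk.cons ((adj_w_lit C j i p).mpr h) SimpleGraph.Walk.nil)
  have hle : (GI C).dist centerV (litV i p) ≤ 2 := by
    simpa using SimpleGraph.dist_le (SimpleGraph.Walk.cons (adj_center_w C j)
      (SimpleGraph.Walk.cons ((adj_w_lit C j i p).mpr h) SimpleGraph.Walk.nil))
  have hne : centerV ≠ litV (m := m) i p := by simp [centerV, litV]
  have h0 : (GI C).dist centerV (litV i p) ≠ 0 := by
    rw [SimpleGraph.dist_ne_zero_iff_ne_and_reachable]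
    exact ⟨hne, hwalk.reachable⟩
  have h1 : (GI C).dist centerV (litV i p) ≠ 1 := fun h1 =>
    not_adj_center_lit C i p (SimpleGraph.dist_eq_one_iff_adj.mp h1)
  omega

end Helpers

/-- A SAT instance is satisfiable iff in `G_I` some independent set
`S ⊆ N₂(v)` dominates `N(v)`. -/
theorem sat_iff_dominating_indep {n m : ℕ} (C : Fin m → Finset (Lit (Fin n))) :
    (∃ t : Fin n → Bool, ∀ j : Fin m, ∃ l ∈ C j, Lit.eval t l = true) ↔
    (∃ S : Set (GIVert n m), S ⊆ N2 (GI C) centerV ∧ IndepSet (GI C) S ∧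
      (GI C).neighborSet centerV ⊆ ClosedNbhd (GI C) S) := by
  classical
  constructor
  · rintro ⟨t, ht⟩
    refine ⟨{x | ∃ i : Fin n, x = litV i (t i) ∧ ∃ j, (⟨i, t i⟩ : Lit (Fin n)) ∈ C j},
      ?_, ?_, ?_⟩
    · rintro x ⟨i, rfl, j, hj⟩
      exact dist_center_lit C hj
    · rintro a ⟨i, rfl, -⟩ b ⟨i', rfl, -⟩ hab
      rw [adj_lit_lit] at hab
      obtain ⟨rfl, hp⟩ := hab
      exact hp rfl
    · rintro x hx
      rw [SimpleGraph.mem_neighborSet] at hx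
      match x with
      | Sum.inl () => exact absurd hx ((GI C).loopless.irrefl centerV)
      | Sum.inr (Sum.inr (i, p)) => exact absurd hx (not_adj_center_lit C i p)
      | Sum.inr (Sum.inl j) =>
        obtain ⟨l, hl, hev⟩ := ht j
        obtain ⟨i, p⟩ := l
        have hp : p = t i := by
          unfold Lit.eval at hev
          cases p <;> simp_all
        subst hp
        refine Or.inr ⟨litV i (t i), ⟨i, rfl, j, hl⟩, ?_⟩
        exact ((adj_w_lit C j i (t i)).mpr hl).symm
  · rintro ⟨S, hSN2, hInd, hDom⟩
    refine ⟨fun i => if litV (m := m) i true ∈ S then true else false, fun j => ?_⟩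
    have hwj : (Sum.inr (Sum.inl j) : GIVert n m) ∈ (GI C).neighborSet centerV :=
      adj_center_w C j
    rcases hDom hwj with hmem | ⟨s, hsS, hadj⟩
    · have h2 : (GI C).dist centerV (Sum.inr (Sum.inl j)) = 2 := hSN2 hmem
      have h1 : (GI C).dist centerV (Sum.inr (Sum.inl j)) = 1 :=
        SimpleGraph.dist_eq_one_iff_adj.mpr (adj_center_w C j)
      omega
    · have hsne : s ≠ centerV := by
        intro h
        have := hSN2 hsS
        rw [h] at this
        simp [N2, SimpleGraph.dist_self] at this
      match s, hsS, hadj, hsne with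
      | Sum.inl (), _, _, hsne => exact absurd rfl hsne
      | Sum.inr (Sum.inl j'), _, hadj, _ => exact absurd hadj.symm (not_adj_w_w C j j')
      | Sum.inr (Sum.inr (i, p)), hsS, hadj, _ =>
        have hmem : (⟨i, p⟩ : Lit (Fin n)) ∈ C j := (adj_w_lit C j i p).mp hadj.symm
        refine ⟨⟨i, p⟩, hmem, ?_⟩
        cases p with
        | true => simp [Lit.eval, hsS, litV]
        | false =>
          have hnt : litV (m := m) i true ∉ S := by
            intro hmem'
            exact hInd hmem' hsS ((adj_lit_lit C i i true false).mpr ⟨rfl, by simp⟩)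
          simp [Lit.eval, hnt]
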